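/- The digital image MSS'_18 = {(0,0,0),(1,1,0),(0,2,0),(-1,1,0),(0,1,-1),(0,1,1)} ⊂ Z^3 is pointed 18-contractible and pointed 26-contractible; consequently Π_1^k(MSS'_18, x) is trivial for k ∈ {18, 26} and every x ∈ MSS'_18. -/
import Mathlib


/- ## General framework for digital topology -/

variable {α : Type*}

/-- A (2,κ)-continuous path of length `m` in the digital image `X`. -/
def PathOn (X : Set α) (κ : α → α → Prop) (m : ℕ) (f : ℕ → α) : Prop :=
  (∀ i ≤ m, f i ∈ X) ∧ ∀ i < m, f i = f (i + 1) ∨ κ (f i) (f (i + 1))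

/-- A κ-loop of length `m` based at `x0`. -/
def IsLoop (X : Set α) (κ : α → α → Prop) (x0 : α) (m : ℕ) (f : ℕ → α) : Prop :=
  PathOn X κ m f ∧ f 0 = x0 ∧ f m = x0

/-- `f'` (of length `m'`) is a trivial extension of `f` (of length `m`):
it traverses the same path, with pauses. -/
def TrivExt (m : ℕ) (f : ℕ → α) (m' : ℕ) (f' : ℕ → α) : Prop :=
  ∃ φ : ℕ → ℕ, φ 0 = 0 ∧ φ m' = m ∧
    (∀ i < m', φ (i + 1) = φ i ∨ φ (i + 1) = φ i + 1) ∧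
    ∀ i ≤ m', f' i = f (φ i)

/-- A homotopy between loops `F` and `G` of the same length `m`, holding the
endpoints fixed at `x0`. -/
def HtpyFixed (X : Set α) (κ : α → α → Prop) (x0 : α) (m M : ℕ) (F G : ℕ → α) : Prop :=
  ∃ H : ℕ → ℕ → α,
    (∀ s ≤ m, ∀ t ≤ M, H s t ∈ X) ∧
    (∀ s ≤ m, H s 0 = F s ∧ H s M = G s) ∧
    (∀ t ≤ M, ∀ s, s < m → (H s t = H (s + 1) t ∨ κ (H s t) (H (s + 1) t))) ∧
    (∀ s ≤ m, ∀ t, t < M → (H s t = H s (t + 1) ∨ κ (H s t) (H s (t + 1)))) ∧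
    (∀ t ≤ M, H 0 t = x0 ∧ H m t = x0)

/-- Two loops based at `x0` belong to the same loop class: they have trivial
extensions of a common length which are homotopic holding the endpoints fixed. -/
def LoopEquiv (X : Set α) (κ : α → α → Prop) (x0 : α)
    (m : ℕ) (f : ℕ → α) (n : ℕ) (g : ℕ → α) : Prop :=
  ∃ m' f' g', TrivExt m f m' f' ∧ TrivExt n g m' g' ∧ ∃ M, HtpyFixed X κ x0 m' M f' g'

/-- The digital fundamental group `Π_1^κ(X,x0)` is trivial: every κ-loop based
at `x0` is in the class of the constant loop. -/
def Pi1Trivial (X : Set α) (κ : α → α → Prop) (x0 : α) : Prop :=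
  ∀ m f, IsLoop X κ x0 m f → LoopEquiv X κ x0 m f 0 (fun _ => x0)

/-- Adjacent or equal. -/
def AdjEq (κ : α → α → Prop) (a b : α) : Prop := a = b ∨ κ a b

/-- `H` is a κ-homotopy (of length `M`) from the identity map of `X` to a constant map. -/
def Contraction (X : Set α) (κ : α → α → Prop) (M : ℕ) (H : α → ℕ → α) : Prop :=
  (∀ x ∈ X, ∀ t ≤ M, H x t ∈ X) ∧
  (∀ x ∈ X, H x 0 = x) ∧
  (∃ p ∈ X, ∀ x ∈ X, H x M = p) ∧
  (∀ t ≤ M, ∀ x ∈ X, ∀ y ∈ X, κ x y → AdjEq κ (H x t) (H y t)) ∧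
  (∀ x ∈ X, ∀ t, t < M → AdjEq κ (H x t) (H x (t + 1)))

/-- `X` is κ-contractible. -/
def Contractible (X : Set α) (κ : α → α → Prop) : Prop :=
  ∃ M H, Contraction X κ M H

/-- `(X,x0)` is pointed κ-contractible: a contraction to `x0` holding `x0` fixed. -/
def PointedContractible (X : Set α) (κ : α → α → Prop) (x0 : α) : Prop :=
  ∃ M H, Contraction X κ M H ∧ (∀ t ≤ M, H x0 t = x0) ∧ ∀ x ∈ X, H x M = x0

/-- The subset `Y` of `X` is κ-nullhomotopic in `X`: its inclusion map is
homotopic in `X` to a constant map. -/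
def NullhomotopicIn (Y X : Set α) (κ : α → α → Prop) : Prop :=
  ∃ M, ∃ H : α → ℕ → α,
    (∀ y ∈ Y, ∀ t ≤ M, H y t ∈ X) ∧
    (∀ y ∈ Y, H y 0 = y) ∧
    (∃ p ∈ X, ∀ y ∈ Y, H y M = p) ∧
    (∀ t ≤ M, ∀ x ∈ Y, ∀ y ∈ Y, κ x y → AdjEq κ (H x t) (H y t)) ∧
    (∀ y ∈ Y, ∀ t, t < M → AdjEq κ (H y t) (H y (t + 1)))

/-- `P` is a κ-path subset of `X`: the image of a κ-path in `X`. -/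
def IsPathSubset (P X : Set α) (κ : α → α → Prop) : Prop :=
  ∃ m f, PathOn X κ m f ∧ (∀ i ≤ m, f i ∈ P) ∧ ∀ p ∈ P, ∃ i ≤ m, f i = p

/-- `X` has no κ-hole: every κ-path subset of `X` is κ-nullhomotopic in `X`. -/
def NoHole (X : Set α) (κ : α → α → Prop) : Prop :=
  ∀ P : Set α, IsPathSubset P X κ → NullhomotopicIn P X κ

/-- `X` is κ-connected (and nonempty). -/
def ConnectedDig (X : Set α) (κ : α → α → Prop) : Prop :=
  X.Nonempty ∧ ∀ a ∈ X, ∀ b ∈ X, ∃ m f, PathOn X κ m f ∧ f 0 = a ∧ f m = b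

/-- The κ-component of `x` in `X`. -/
def Component (X : Set α) (κ : α → α → Prop) (x : α) : Set α :=
  {y | y ∈ X ∧ ∃ m f, PathOn X κ m f ∧ f 0 = x ∧ f m = y}

/-- A loop-preserving homotopy from the loop `f` to the loop `g`
(each stage is a loop; the basepoint may move). -/
def LoopPresHtpy (X : Set α) (κ : α → α → Prop) (m M : ℕ)
    (f g : ℕ → α) (H : ℕ → ℕ → α) : Prop :=
  (∀ s ≤ m, ∀ t ≤ M, H s t ∈ X) ∧
  (∀ s ≤ m, H s 0 = f s ∧ H s M = g s) ∧
  (∀ t ≤ M, ∀ s, s < m → (H s t = H (s + 1) t ∨ κ (H s t) (H (s + 1) t))) ∧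
  (∀ s ≤ m, ∀ t, t < M → (H s t = H s (t + 1) ∨ κ (H s t) (H s (t + 1)))) ∧
  (∀ t ≤ M, H 0 t = H m t)

/-- `X` has no κ-loophole: every κ-loop in `X` is nullhomotopic in `X` by a
loop-preserving homotopy. -/
def NoLoophole (X : Set α) (κ : α → α → Prop) : Prop :=
  ∀ m f, PathOn X κ m f → f 0 = f m →
    ∃ p ∈ X, ∃ M H, LoopPresHtpy X κ m M f (fun _ => p) H

/- ## Concrete adjacencies and images -/

/-- 6-adjacency (c₁-adjacency) on ℤ³. -/
def adj6 (p q : ℤ × ℤ × ℤ) : Prop :=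
  |p.1 - q.1| + |p.2.1 - q.2.1| + |p.2.2 - q.2.2| = 1

/-- 26-adjacency (c₃-adjacency) on ℤ³. -/
def adj26 (p q : ℤ × ℤ × ℤ) : Prop :=
  p ≠ q ∧ |p.1 - q.1| ≤ 1 ∧ |p.2.1 - q.2.1| ≤ 1 ∧ |p.2.2 - q.2.2| ≤ 1

/-- 18-adjacency (c₂-adjacency) on ℤ³. -/
def adj18 (p q : ℤ × ℤ × ℤ) : Prop :=
  adj26 p q ∧ (p.1 = q.1 ∨ p.2.1 = q.2.1 ∨ p.2.2 = q.2.2)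

/-- 4-adjacency (c₁-adjacency) on ℤ². -/
def adj4 (p q : ℤ × ℤ) : Prop := |p.1 - q.1| + |p.2 - q.2| = 1

/-- 8-adjacency (c₂-adjacency) on ℤ². -/
def adj8 (p q : ℤ × ℤ) : Prop := p ≠ q ∧ |p.1 - q.1| ≤ 1 ∧ |p.2 - q.2| ≤ 1

/-- 2-adjacency (c₁-adjacency) on ℤ. -/
def adj2 (m n : ℤ) : Prop := |m - n| = 1

/-- The 10-point digital 2-sphere `MSS₁₈`. -/
def MSS18 : Set (ℤ × ℤ × ℤ) :=
  {(0,0,0), (1,1,0), (1,2,0), (0,3,0), (-1,2,0),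
   (-1,1,0), (0,1,-1), (0,2,-1), (0,2,1), (0,1,1)}

/-- The 6-point digital 2-sphere `MSS'₁₈ = MSS'₂₆`. -/
def MSS18' : Set (ℤ × ℤ × ℤ) :=
  {(0,0,0), (1,1,0), (0,2,0), (-1,1,0), (0,1,-1), (0,1,1)}

/-- The digital 2-sphere `MSS₆ = [0,2]³ \ {(1,1,1)}`. -/
def MSS6 : Set (ℤ × ℤ × ℤ) :=
  {p | (0 ≤ p.1 ∧ p.1 ≤ 2) ∧ (0 ≤ p.2.1 ∧ p.2.1 ≤ 2) ∧ (0 ≤ p.2.2 ∧ p.2.2 ≤ 2) ∧ p ≠ (1,1,1)}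

/-- The image `X = ([0,2]² × [0,1]) \ {(1,1,1)}` of Example 2.11. -/
def Xbox : Set (ℤ × ℤ × ℤ) :=
  {p | (0 ≤ p.1 ∧ p.1 ≤ 2) ∧ (0 ≤ p.2.1 ∧ p.2.1 ≤ 2) ∧ (0 ≤ p.2.2 ∧ p.2.2 ≤ 1) ∧ p ≠ (1,1,1)}

/- ## Auxiliary material for the proof of Statement 8 -/

instance (p q : ℤ × ℤ × ℤ) : Decidable (adj26 p q) := by unfold adj26; infer_instance
instance (p q : ℤ × ℤ × ℤ) : Decidable (adj18 p q) := by unfold adj18; infer_instance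
instance {κ : α → α → Prop} [DecidableEq α] [∀ a b, Decidable (κ a b)] (a b : α) :
    Decidable (AdjEq κ a b) := by unfold AdjEq; infer_instance

/-- The six points of `MSS18'` as a list. -/
def T18' : List (ℤ × ℤ × ℤ) := [(0,0,0), (1,1,0), (0,2,0), (-1,1,0), (0,1,-1), (0,1,1)]

lemma mem_T18' (p : ℤ × ℤ × ℤ) : p ∈ MSS18' ↔ p ∈ T18' := by
  simp [MSS18', T18']

/-- The explicit contraction of `MSS18'` to the basepoint `x0`. -/
def ctr (x0 x : ℤ × ℤ × ℤ) (t : ℕ) : ℤ × ℤ × ℤ :=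
  let c : ℤ × ℤ × ℤ := (0, 1, 0)
  let v := x0 - c
  let n : ℤ × ℤ × ℤ := (v.2.2, v.1, v.2.1)
  let w := x - c
  let g1 := if w = -v then n else if w = -n then v else w
  let g2 := if g1 = v ∨ g1 = n then g1 else v
  c + (if t = 0 then w else if t = 1 then g1 else if t = 2 then g2 else v)

/-- All finite checks for the contraction, phrased decidably. -/
def Chk (x0 : ℤ × ℤ × ℤ) : Prop :=
  (∀ x ∈ T18', ∀ t ∈ [0,1,2,3], ctr x0 x t ∈ T18') ∧
  (∀ x ∈ T18', ctr x0 x 0 = x) ∧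
  (∀ x ∈ T18', ctr x0 x 3 = x0) ∧
  (∀ t ∈ [0,1,2,3], ∀ x ∈ T18', ∀ y ∈ T18', adj18 x y →
      AdjEq adj18 (ctr x0 x t) (ctr x0 y t)) ∧
  (∀ x ∈ T18', ∀ t ∈ [0,1,2], AdjEq adj18 (ctr x0 x t) (ctr x0 x (t+1))) ∧
  (∀ t ∈ [0,1,2,3], ctr x0 x0 t = x0)

instance (x0 : ℤ × ℤ × ℤ) : Decidable (Chk x0) := by unfold Chk; infer_instance

lemma chk_all : ∀ x0 ∈ T18', Chk x0 := by decide

lemma mem_list_of_le3 (t : ℕ) (ht : t ≤ 3) : t ∈ [0,1,2,3] := by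
  interval_cases t <;> simp

lemma mem_list_of_lt3 (t : ℕ) (ht : t < 3) : t ∈ [0,1,2] := by
  interval_cases t <;> simp

lemma adj18_of_adj26 : ∀ x ∈ T18', ∀ y ∈ T18', adj26 x y → adj18 x y := by decide

lemma adj26_of_adj18 {a b : ℤ × ℤ × ℤ} (h : adj18 a b) : adj26 a b := h.1

lemma adjEq26_of_adjEq18 {a b : ℤ × ℤ × ℤ} (h : AdjEq adj18 a b) : AdjEq adj26 a b :=
  h.imp id adj26_of_adj18

lemma pointed18 (x0 : ℤ × ℤ × ℤ) (hx0 : x0 ∈ MSS18') :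
    PointedContractible MSS18' adj18 x0 := by
  obtain ⟨h1, h2, h3, h4, h5, h6⟩ := chk_all x0 ((mem_T18' x0).mp hx0)
  refine ⟨3, ctr x0, ⟨?_, ?_, ⟨x0, hx0, ?_⟩, ?_, ?_⟩, ?_, ?_⟩
  · intro x hx t ht
    exact (mem_T18' _).mpr (h1 x ((mem_T18' x).mp hx) t (mem_list_of_le3 t ht))
  · intro x hx; exact h2 x ((mem_T18' x).mp hx)
  · intro x hx; exact h3 x ((mem_T18' x).mp hx)
  · intro t ht x hx y hy hxy
    exact h4 t (mem_list_of_le3 t ht) x ((mem_T18' x).mp hx) y ((mem_T18' y).mp hy) hxy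
  · intro x hx t ht
    exact h5 x ((mem_T18' x).mp hx) t (mem_list_of_lt3 t ht)
  · intro t ht; exact h6 t (mem_list_of_le3 t ht)
  · intro x hx; exact h3 x ((mem_T18' x).mp hx)

lemma pointed26 (x0 : ℤ × ℤ × ℤ) (hx0 : x0 ∈ MSS18') :
    PointedContractible MSS18' adj26 x0 := by
  obtain ⟨M, H, ⟨hmem, hzero, hp, hadj, hstep⟩, hfix, hend⟩ := pointed18 x0 hx0
  refine ⟨M, H, ⟨hmem, hzero, hp, ?_, ?_⟩, hfix, hend⟩
  · intro t ht x hx y hy hxy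
    exact adjEq26_of_adjEq18 (hadj t ht x hx y hy
      (adj18_of_adj26 x ((mem_T18' x).mp hx) y ((mem_T18' y).mp hy) hxy))
  · intro x hx t ht
    exact adjEq26_of_adjEq18 (hstep x hx t ht)

/-- Pointed contractibility implies triviality of the fundamental group. -/
lemma pi1_of_pointed {X : Set α} {κ : α → α → Prop} {x0 : α}
    (h : PointedContractible X κ x0) : Pi1Trivial X κ x0 := by
  obtain ⟨M, H, ⟨hmem, hzero, _, hadj, hstep⟩, hfix, hend⟩ := h
  rintro m f ⟨⟨hfm, hfadj⟩, hf0, hfmx⟩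
  refine ⟨m, f, (fun _ => x0),
    ⟨fun i => i, rfl, rfl, fun i _ => Or.inr rfl, fun i _ => rfl⟩,
    ⟨fun _ => 0, rfl, rfl, fun i _ => Or.inl rfl, fun i _ => rfl⟩,
    M, fun s t => H (f s) t, ?_, ?_, ?_, ?_, ?_⟩
  · intro s hs t ht; exact hmem (f s) (hfm s hs) t ht
  · intro s hs
    exact ⟨hzero (f s) (hfm s hs), hend (f s) (hfm s hs)⟩
  · intro t ht s hs
    rcases hfadj s hs with heq | hk
    · exact Or.inl (congrArg (fun z => H z t) heq)
    · exact hadj t ht (f s) (hfm s (le_of_lt hs)) (f (s+1)) (hfm (s+1) hs) hk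
  · intro s hs t ht
    exact hstep (f s) (hfm s hs) t ht
  · intro t ht
    constructor
    · show H (f 0) t = x0; rw [hf0]; exact hfix t ht
    · show H (f m) t = x0; rw [hfmx]; exact hfix t ht

/-- `MSS'₁₈` is pointed 18- and 26-contractible, and
`Π₁ᵏ(MSS'₁₈, x)` is trivial for `k ∈ {18,26}` and every `x`. -/
theorem stmt8 :
    (∀ x ∈ MSS18', PointedContractible MSS18' adj18 x ∧ PointedContractible MSS18' adj26 x) ∧
    ∀ x ∈ MSS18', Pi1Trivial MSS18' adj18 x ∧ Pi1Trivial MSS18' adj26 x := by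
  refine ⟨fun x hx => ⟨pointed18 x hx, pointed26 x hx⟩,
    fun x hx => ⟨pi1_of_pointed (pointed18 x hx), pi1_of_pointed (pointed26 x hx)⟩⟩
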